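/- In the complex Brauer algebra B_4(3), with F = (1-s_1)(1-s_3), e_{1,4} = s_1 s_3 e_2 s_3 s_1, and Φ = F e_2 F - F - (1/4) F e_2 e_{1,4} F, we have e_i Φ = Φ e_i = 0 for i = 1, 2, 3. -/

import Mathlib

/-!
For `i = 1, 3`: `e_i (1 - s_i) = (1 - s_i) e_i = 0` and `s_1`, `s_3` commute with `e_3`, `e_1`
respectively, so `e_i F = F e_i = 0`, while every term of `Φ` begins and ends with `F`.

For `i = 2`, put `P = e_2 e_{1,4}`, the diagram with arcs `{1,4}`, `{2,3}` on both rows. Then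
`P = e_2 s_1 s_3 e_2` and `P s_1 s_3 = P`, because `P s_1` and `P s_3` both reduce to
`e_2 e_1 e_3 s_2`. Expanding `F` with `e_2 s_1 e_2 = e_2 s_3 e_2 = e_2` and `e_2² = 3 e_2` gives
`e_2 F e_2 = e_2 + P`, hence `e_2 F P = P F e_2 = (1 + 3) P`. So
`e_2 Φ = (e_2 + P) F - e_2 F - ¼ (4 P) F = 0`, and likewise `Φ e_2 = 0`.
-/

noncomputable section

variable (A : Type) [CommRing A] (n : ℕ) (δ : A)

/-- The free-algebra generator corresponding to the transposition generator `s_{i+1}`. -/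
def sF (i : Fin n) : FreeAlgebra A (Fin n ⊕ Fin n) := FreeAlgebra.ι A (Sum.inl i)

/-- The free-algebra generator corresponding to the Temperley–Lieb generator `e_{i+1}`. -/
def eF (i : Fin n) : FreeAlgebra A (Fin n ⊕ Fin n) := FreeAlgebra.ι A (Sum.inr i)

/-- The defining relations of the Brauer algebra `B_{n+1}(δ)` with generators
`s_1, …, s_n`, `e_1, …, e_n` (indexed here by `Fin n`). -/
inductive BrauerRel : FreeAlgebra A (Fin n ⊕ Fin n) → FreeAlgebra A (Fin n ⊕ Fin n) → Prop
  | s_sq (i : Fin n) : BrauerRel (sF A n i * sF A n i) 1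
  | e_sq (i : Fin n) : BrauerRel (eF A n i * eF A n i) (algebraMap A _ δ * eF A n i)
  | se (i : Fin n) : BrauerRel (sF A n i * eF A n i) (eF A n i)
  | es (i : Fin n) : BrauerRel (eF A n i * sF A n i) (eF A n i)
  | comm_ss (i j : Fin n) (h : (i : ℕ) + 2 ≤ j ∨ (j : ℕ) + 2 ≤ i) :
      BrauerRel (sF A n i * sF A n j) (sF A n j * sF A n i)
  | comm_se (i j : Fin n) (h : (i : ℕ) + 2 ≤ j ∨ (j : ℕ) + 2 ≤ i) :
      BrauerRel (sF A n i * eF A n j) (eF A n j * sF A n i)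
  | comm_ee (i j : Fin n) (h : (i : ℕ) + 2 ≤ j ∨ (j : ℕ) + 2 ≤ i) :
      BrauerRel (eF A n i * eF A n j) (eF A n j * eF A n i)
  | braid (i j : Fin n) (h : (j : ℕ) = i + 1) :
      BrauerRel (sF A n i * sF A n j * sF A n i) (sF A n j * sF A n i * sF A n j)
  | eee_up (i j : Fin n) (h : (j : ℕ) = i + 1) :
      BrauerRel (eF A n i * eF A n j * eF A n i) (eF A n i)
  | eee_down (i j : Fin n) (h : (j : ℕ) = i + 1) :
      BrauerRel (eF A n j * eF A n i * eF A n j) (eF A n j)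
  | see (i j : Fin n) (h : (j : ℕ) = i + 1) :
      BrauerRel (sF A n i * eF A n j * eF A n i) (sF A n j * eF A n i)
  | ees (i j : Fin n) (h : (j : ℕ) = i + 1) :
      BrauerRel (eF A n j * eF A n i * sF A n j) (eF A n j * sF A n i)

/-- The Brauer algebra `B_{n+1}(δ)` over `A`, presented by generators and relations. -/
abbrev BrauerAlg : Type := RingQuot (BrauerRel A n δ)

/-- The generator `s_{i+1}` of the Brauer algebra. -/
def sg (i : Fin n) : BrauerAlg A n δ := RingQuot.mkAlgHom A (BrauerRel A n δ) (sF A n i)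

/-- The generator `e_{i+1}` of the Brauer algebra. -/
def eg (i : Fin n) : BrauerAlg A n δ := RingQuot.mkAlgHom A (BrauerRel A n δ) (eF A n i)


/-- `F = (1-s_1)(1-s_3)` in the complex Brauer algebra `B_4(3)`. -/
def Fel : BrauerAlg ℂ 3 (3 : ℂ) := (1 - sg ℂ 3 3 0) * (1 - sg ℂ 3 3 2)

/-- `e_{1,4} = s_1 s_3 e_2 s_3 s_1` in `B_4(3)`. -/
def e14 : BrauerAlg ℂ 3 (3 : ℂ) := sg ℂ 3 3 0 * sg ℂ 3 3 2 * eg ℂ 3 3 1 * sg ℂ 3 3 2 * sg ℂ 3 3 0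

/-- `Φ = F e_2 F - F - (1/4) F e_2 e_{1,4} F` in `B_4(3)`. -/
def Phi : BrauerAlg ℂ 3 (3 : ℂ) :=
  Fel * eg ℂ 3 3 1 * Fel - Fel - ((1 : ℂ)/4) • (Fel * eg ℂ 3 3 1 * e14 * Fel)

namespace BrauerAlg

variable {A n δ}

local notation "s" => sg A n δ
local notation "e" => eg A n δ

theorem sg_mul_self (i : Fin n) : s i * s i = 1 := by
  simpa only [sg, map_mul, map_one] using RingQuot.mkAlgHom_rel A (BrauerRel.s_sq (δ := δ) i)

theorem eg_mul_self (i : Fin n) : e i * e i = δ • e i := by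
  simpa only [eg, map_mul, AlgHom.commutes, ← Algebra.smul_def, map_smul] using
    RingQuot.mkAlgHom_rel A (BrauerRel.e_sq (δ := δ) i)

theorem sg_mul_eg_self (i : Fin n) : s i * e i = e i := by
  simpa only [sg, eg, map_mul] using RingQuot.mkAlgHom_rel A (BrauerRel.se (δ := δ) i)

theorem eg_mul_sg_self (i : Fin n) : e i * s i = e i := by
  simpa only [sg, eg, map_mul] using RingQuot.mkAlgHom_rel A (BrauerRel.es (δ := δ) i)

theorem commute_sg_sg {i j : Fin n} (h : (i : ℕ) + 2 ≤ j ∨ (j : ℕ) + 2 ≤ i) :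
    Commute (s i) (s j) := by
  change s i * s j = s j * s i
  simpa only [sg, map_mul] using RingQuot.mkAlgHom_rel A (BrauerRel.comm_ss (δ := δ) i j h)

theorem commute_sg_eg {i j : Fin n} (h : (i : ℕ) + 2 ≤ j ∨ (j : ℕ) + 2 ≤ i) :
    Commute (s i) (e j) := by
  change s i * e j = e j * s i
  simpa only [sg, eg, map_mul] using RingQuot.mkAlgHom_rel A (BrauerRel.comm_se (δ := δ) i j h)

theorem commute_eg_eg {i j : Fin n} (h : (i : ℕ) + 2 ≤ j ∨ (j : ℕ) + 2 ≤ i) :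
    Commute (e i) (e j) := by
  change e i * e j = e j * e i
  simpa only [eg, map_mul] using RingQuot.mkAlgHom_rel A (BrauerRel.comm_ee (δ := δ) i j h)

theorem eg_mul_one_sub_sg (i : Fin n) : e i * (1 - s i) = 0 := by
  rw [mul_sub, mul_one, eg_mul_sg_self, sub_self]

theorem one_sub_sg_mul_eg (i : Fin n) : (1 - s i) * e i = 0 := by
  rw [sub_mul, one_mul, sg_mul_eg_self, sub_self]

section Adjacent

variable {i j : Fin n}

theorem eg_mul_eg_succ_mul_eg (hij : (j : ℕ) = i + 1) : e i * e j * e i = e i := by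
  simpa only [eg, map_mul] using RingQuot.mkAlgHom_rel A (BrauerRel.eee_up (δ := δ) i j hij)

theorem eg_succ_mul_eg_mul_eg_succ (hij : (j : ℕ) = i + 1) : e j * e i * e j = e j := by
  simpa only [eg, map_mul] using RingQuot.mkAlgHom_rel A (BrauerRel.eee_down (δ := δ) i j hij)

theorem sg_mul_eg_succ_mul_eg (hij : (j : ℕ) = i + 1) : s i * e j * e i = s j * e i := by
  simpa only [sg, eg, map_mul] using RingQuot.mkAlgHom_rel A (BrauerRel.see (δ := δ) i j hij)

theorem eg_succ_mul_eg_mul_sg_succ (hij : (j : ℕ) = i + 1) : e j * e i * s j = e j * s i := by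
  simpa only [sg, eg, map_mul] using RingQuot.mkAlgHom_rel A (BrauerRel.ees (δ := δ) i j hij)

theorem eg_succ_mul_sg_mul_eg_succ (hij : (j : ℕ) = i + 1) : e j * s i * e j = e j := by
  rw [← eg_succ_mul_eg_mul_sg_succ hij, mul_assoc _ (s j), sg_mul_eg_self,
    eg_succ_mul_eg_mul_eg_succ hij]

theorem eg_mul_sg_succ_mul_eg (hij : (j : ℕ) = i + 1) : e i * s j * e i = e i := by
  rw [mul_assoc, ← sg_mul_eg_succ_mul_eg hij, ← mul_assoc, ← mul_assoc, eg_mul_sg_self,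
    eg_mul_eg_succ_mul_eg hij]

theorem sg_mul_eg_succ_mul_sg (hij : (j : ℕ) = i + 1) : s i * e j * s i = s j * e i * s j :=
  calc s i * e j * s i = s i * (e j * e i * s j) := by
        rw [eg_succ_mul_eg_mul_sg_succ hij, mul_assoc]
    _ = s j * e i * s j := by rw [← mul_assoc, ← mul_assoc, sg_mul_eg_succ_mul_eg hij]

theorem eg_succ_mul_sg_mul_sg_succ (hij : (j : ℕ) = i + 1) : e j * s i * s j = e j * e i := by
  rw [← eg_succ_mul_eg_mul_sg_succ hij, mul_assoc, sg_mul_self, mul_one]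

theorem eg_mul_sg_succ_mul_sg (hij : (j : ℕ) = i + 1) : e i * s j * s i = e i * e j :=
  calc e i * s j * s i = e i * (e j * e i * s j) * s i := by
        rw [← mul_assoc (e i), ← mul_assoc (e i), eg_mul_eg_succ_mul_eg hij]
    _ = e i * e j := by
        rw [eg_succ_mul_eg_mul_sg_succ hij, mul_assoc, mul_assoc, sg_mul_self, mul_one]

end Adjacent

theorem eg_mul_sg_mul_sg_mul_eg_mul_sg_mul_sg {i j k : Fin n} (hij : (j : ℕ) = i + 1)
    (hjk : (k : ℕ) = j + 1) : e j * s i * s k * e j * s i * s k = e j * s i * s k * e j := by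
  have hik : (i : ℕ) + 2 ≤ k ∨ (k : ℕ) + 2 ≤ i := Or.inl (by omega)
  calc e j * s i * s k * e j * s i * s k
      = e j * s k * (s i * e j * s i) * s k := by
        rw [mul_assoc (e j), (commute_sg_sg hik).eq]; simp only [mul_assoc]
    _ = e j * s k * s j * e i * s j * s k := by
        rw [sg_mul_eg_succ_mul_sg hij]; simp only [mul_assoc]
    _ = e j * e k * e i * s j * s k := by rw [eg_mul_sg_succ_mul_sg hjk]
    _ = e j * e i * e k * s j * s k := by
        rw [mul_assoc (e j), ← (commute_eg_eg hik).eq, ← mul_assoc]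
    _ = e j * s i * (s j * e k * s j) * s k := by
        rw [← eg_succ_mul_sg_mul_sg_succ hij]; simp only [mul_assoc]
    _ = e j * s i * s k * e j := by
        rw [sg_mul_eg_succ_mul_sg hjk]; simp only [mul_assoc, sg_mul_self, mul_one]

end BrauerAlg

open BrauerAlg

local notation "s₁" => sg ℂ 3 (3 : ℂ) 0
local notation "s₃" => sg ℂ 3 (3 : ℂ) 2
local notation "e₁" => eg ℂ 3 (3 : ℂ) 0
local notation "e₂" => eg ℂ 3 (3 : ℂ) 1
local notation "e₃" => eg ℂ 3 (3 : ℂ) 2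

theorem eg_zero_mul_Fel : e₁ * Fel = 0 := by
  rw [Fel, ← mul_assoc, eg_mul_one_sub_sg, zero_mul]

theorem Fel_mul_eg_zero : Fel * e₁ = 0 := by
  have : Commute (1 - s₃) e₁ := (Commute.one_left _).sub_left (commute_sg_eg (Or.inr le_rfl))
  rw [Fel, mul_assoc, this.eq, ← mul_assoc, one_sub_sg_mul_eg, zero_mul]

theorem eg_two_mul_Fel : e₃ * Fel = 0 := by
  have : Commute (1 - s₁) e₃ := (Commute.one_left _).sub_left (commute_sg_eg (Or.inl le_rfl))
  rw [Fel, ← mul_assoc, ← this.eq, mul_assoc, eg_mul_one_sub_sg, mul_zero]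

theorem Fel_mul_eg_two : Fel * e₃ = 0 := by
  rw [Fel, mul_assoc, one_sub_sg_mul_eg, mul_zero]

theorem eg_one_mul_e14 : e₂ * e14 = e₂ * s₁ * s₃ * e₂ :=
  calc e₂ * e14 = e₂ * s₁ * s₃ * e₂ * s₁ * s₃ := by
        simp only [e14, mul_assoc]; rw [← (commute_sg_sg (Or.inl le_rfl)).eq]
    _ = e₂ * s₁ * s₃ * e₂ := eg_mul_sg_mul_sg_mul_eg_mul_sg_mul_sg rfl rfl

theorem eg_one_mul_Fel_mul_eg_one : e₂ * Fel * e₂ = e₂ + e₂ * e14 :=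
  calc e₂ * Fel * e₂ = e₂ * e₂ - e₂ * s₁ * e₂ - e₂ * s₃ * e₂ + e₂ * s₁ * s₃ * e₂ := by
        simp only [Fel, mul_sub, sub_mul, mul_one, one_mul, mul_assoc]; abel
    _ = (3 : ℂ) • e₂ - e₂ - e₂ + e₂ * e14 := by
        rw [eg_mul_self, eg_succ_mul_sg_mul_eg_succ rfl, eg_mul_sg_succ_mul_eg rfl, eg_one_mul_e14]
    _ = e₂ + e₂ * e14 := by module

theorem eg_one_mul_e14_mul_sg_zero_mul_sg_two_mul_eg_one :
    e₂ * e14 * s₁ * s₃ * e₂ = (3 : ℂ) • (e₂ * e14) := by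
  rw [eg_one_mul_e14, eg_mul_sg_mul_sg_mul_eg_mul_sg_mul_sg rfl rfl, mul_assoc _ e₂ e₂, eg_mul_self,
    mul_smul_comm]

theorem eg_one_mul_Fel_mul_eg_one_mul_e14 : e₂ * Fel * (e₂ * e14) = (4 : ℂ) • (e₂ * e14) :=
  calc e₂ * Fel * (e₂ * e14) = (e₂ * Fel * e₂) * s₁ * s₃ * e₂ := by
        rw [eg_one_mul_e14]; simp only [mul_assoc]
    _ = e₂ * e14 + e₂ * e14 * s₁ * s₃ * e₂ := by
        rw [eg_one_mul_Fel_mul_eg_one, eg_one_mul_e14]; simp only [add_mul]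
    _ = (4 : ℂ) • (e₂ * e14) := by
        rw [eg_one_mul_e14_mul_sg_zero_mul_sg_two_mul_eg_one]; module

theorem eg_one_mul_e14_mul_Fel_mul_eg_one : e₂ * e14 * Fel * e₂ = (4 : ℂ) • (e₂ * e14) :=
  calc e₂ * e14 * Fel * e₂ = e₂ * s₁ * s₃ * (e₂ * Fel * e₂) := by
        rw [eg_one_mul_e14]; simp only [mul_assoc]
    _ = e₂ * e14 + e₂ * e14 * s₁ * s₃ * e₂ := by
        rw [eg_one_mul_Fel_mul_eg_one, mul_add, eg_one_mul_e14]; simp only [mul_assoc]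
    _ = (4 : ℂ) • (e₂ * e14) := by
        rw [eg_one_mul_e14_mul_sg_zero_mul_sg_two_mul_eg_one]; module

theorem mul_Phi_eq_zero_of_mul_Fel {x : BrauerAlg ℂ 3 3} (h : x * Fel = 0) : x * Phi = 0 := by
  simp only [Phi, mul_sub, mul_smul_comm, ← mul_assoc, h, zero_mul, smul_zero, sub_self]

theorem Phi_mul_eq_zero_of_Fel_mul {x : BrauerAlg ℂ 3 3} (h : Fel * x = 0) : Phi * x = 0 := by
  simp only [Phi, sub_mul, smul_mul_assoc, mul_assoc, h, mul_zero, smul_zero, sub_self]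

theorem eg_one_mul_Phi : e₂ * Phi = 0 := by
  have h₁ : e₂ * (Fel * e₂ * Fel) = (e₂ + e₂ * e14) * Fel := by
    rw [← eg_one_mul_Fel_mul_eg_one]; simp only [mul_assoc]
  have h₂ : e₂ * (Fel * e₂ * e14 * Fel) = (4 : ℂ) • (e₂ * e14 * Fel) := by
    rw [← smul_mul_assoc, ← eg_one_mul_Fel_mul_eg_one_mul_e14]; simp only [mul_assoc]
  rw [Phi, mul_sub, mul_sub, mul_smul_comm, h₁, h₂, add_mul]
  module

theorem Phi_mul_eg_one : Phi * e₂ = 0 := by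
  have h₁ : Fel * e₂ * Fel * e₂ = Fel * (e₂ + e₂ * e14) := by
    rw [← eg_one_mul_Fel_mul_eg_one]; simp only [mul_assoc]
  have h₂ : Fel * e₂ * e14 * Fel * e₂ = (4 : ℂ) • (Fel * (e₂ * e14)) := by
    rw [← mul_smul_comm, ← eg_one_mul_e14_mul_Fel_mul_eg_one]; simp only [mul_assoc]
  rw [Phi, sub_mul, sub_mul, smul_mul_assoc, h₁, h₂, mul_add]
  module

/-- In the complex Brauer algebra `B_4(3)`, with `F = (1-s_1)(1-s_3)`,
`e_{1,4} = s_1 s_3 e_2 s_3 s_1` and `Φ = F e_2 F - F - (1/4) F e_2 e_{1,4} F`, one has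
`e_i Φ = Φ e_i = 0` for `i = 1, 2, 3`. -/
theorem brauer_e_Phi_zero :
    ∀ i : Fin 3, eg ℂ 3 3 i * Phi = 0 ∧ Phi * eg ℂ 3 3 i = 0 := by
  intro i
  fin_cases i
  · exact ⟨mul_Phi_eq_zero_of_mul_Fel eg_zero_mul_Fel, Phi_mul_eq_zero_of_Fel_mul Fel_mul_eg_zero⟩
  · exact ⟨eg_one_mul_Phi, Phi_mul_eg_one⟩
  · exact ⟨mul_Phi_eq_zero_of_mul_Fel eg_two_mul_Fel, Phi_mul_eq_zero_of_Fel_mul Fel_mul_eg_two⟩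

end
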